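/- Let n ≥ 1, let f : [0,1) → ℝ be defined by f(0) = 1/2 and f(x) = (1 − √(1 − x²))/x² for 0 < x < 1, and let p, q ∈ ℝ^{n+1} satisfy ‖q‖ = 1, ⟨p, q⟩ = 0 and ‖p‖ < 1. Define z ∈ ℂ^{n+1} by z_j = √(f(‖p‖))·p_j + i·q_j/√(f(‖p‖)). Then ∑_j |z_j|² = 2 and ∑_j z_j² = −2√(1 − ‖p‖²); in particular ∑_j z_j² is a negative real number. -/

import Mathlib

open scoped RealInnerProductSpace

/-- The auxiliary function `f` of Section 3.1: `f(0) = 1/2` and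
`f(x) = (1 − √(1 − x²))/x²` for `x ≠ 0`. -/
noncomputable def auxF (x : ℝ) : ℝ :=
  if x = 0 then 1 / 2 else (1 - Real.sqrt (1 - x ^ 2)) / x ^ 2

/-!
Put `s = √(1 - ‖p‖²)`. The function `f` is built so that `f(‖p‖)‖p‖² = 1 - s` and
`f(‖p‖)(1 + s) = 1`. Writing `z = u + i v` with `u = √f · p` and `v = q / √f`, this gives
`‖u‖² = 1 - s`, `‖v‖² = 1 + s` and `⟪u, v⟫ = ⟪p, q⟫ = 0`, so
`∑ |z_j|² = ‖u‖² + ‖v‖² = 2` and `∑ z_j² = ‖u‖² - ‖v‖² + 2i⟪u, v⟫ = -2s`.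
-/

theorem auxF_mul_sq (x : ℝ) : auxF x * x ^ 2 = 1 - Real.sqrt (1 - x ^ 2) := by
  by_cases hx : x = 0
  · simp [hx]
  · rw [auxF, if_neg hx]
    field_simp

theorem auxF_mul_one_add_sqrt {x : ℝ} (hx : x ^ 2 ≤ 1) :
    auxF x * (1 + Real.sqrt (1 - x ^ 2)) = 1 := by
  by_cases hx0 : x = 0
  · norm_num [hx0, auxF]
  · have hs : Real.sqrt (1 - x ^ 2) ^ 2 = 1 - x ^ 2 := Real.sq_sqrt (by linarith)
    rw [auxF, if_neg hx0]
    field_simp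
    linear_combination -hs

theorem auxF_pos {x : ℝ} (hx : x ^ 2 ≤ 1) : 0 < auxF x :=
  pos_of_mul_pos_left ((auxF_mul_one_add_sqrt hx).symm ▸ one_pos)
    (by positivity)

section Complexify

variable {ι : Type*} [Fintype ι] (u v : EuclideanSpace ℝ ι)

theorem sum_norm_sq_add_mul_I :
    ∑ j, ‖(u j : ℂ) + Complex.I * v j‖ ^ 2 = ‖u‖ ^ 2 + ‖v‖ ^ 2 := by
  simp only [Complex.sq_norm, mul_comm Complex.I, Complex.normSq_add_mul_I,
    Finset.sum_add_distrib, EuclideanSpace.norm_sq_eq, Real.norm_eq_abs, sq_abs]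

theorem sum_sq_add_mul_I :
    ∑ j, ((u j : ℂ) + Complex.I * v j) ^ 2 =
      ((‖u‖ ^ 2 - ‖v‖ ^ 2 : ℝ) : ℂ) + 2 * Complex.I * (⟪u, v⟫ : ℝ) := by
  simp only [EuclideanSpace.norm_sq_eq, Real.norm_eq_abs, sq_abs, PiLp.inner_apply,
    RCLike.inner_apply, conj_trivial]
  push_cast
  rw [Finset.mul_sum, ← Finset.sum_sub_distrib, ← Finset.sum_add_distrib]
  refine Finset.sum_congr rfl fun j _ => ?_
  linear_combination (v j : ℂ) ^ 2 * Complex.I_sq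

end Complexify

theorem psiP_lift_lands_on_sphere_and_off_quadric_general (n : ℕ)
    (p q : EuclideanSpace ℝ (Fin (n + 1)))
    (hq : ‖q‖ = 1) (hpq : ⟪p, q⟫ = 0) (hp : ‖p‖ < 1)
    (z : Fin (n + 1) → ℂ)
    (hz : ∀ j, z j = (Real.sqrt (auxF ‖p‖) * p j : ℝ) +
      Complex.I * ((q j / Real.sqrt (auxF ‖p‖) : ℝ) : ℂ)) :
    (∑ j, ‖z j‖ ^ 2) = 2 ∧
    (∑ j, (z j) ^ 2) = ((-2 * Real.sqrt (1 - ‖p‖ ^ 2) : ℝ) : ℂ) := by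
  have hp2 : ‖p‖ ^ 2 ≤ 1 := by nlinarith [norm_nonneg p]
  set a := Real.sqrt (auxF ‖p‖)
  have ha2 : a ^ 2 = auxF ‖p‖ := Real.sq_sqrt (auxF_pos hp2).le
  have hz' : z = fun j => ((a • p) j : ℂ) + Complex.I * (a⁻¹ • q) j := by
    ext j; simp [hz, div_eq_inv_mul]
  have hu : ‖a • p‖ ^ 2 = 1 - Real.sqrt (1 - ‖p‖ ^ 2) := by
    rw [norm_smul, mul_pow, Real.norm_eq_abs, sq_abs, ha2, auxF_mul_sq]
  have hv : ‖a⁻¹ • q‖ ^ 2 = 1 + Real.sqrt (1 - ‖p‖ ^ 2) := by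
    rw [norm_smul, mul_pow, Real.norm_eq_abs, sq_abs, inv_pow, ha2, hq, one_pow, mul_one,
      inv_eq_of_mul_eq_one_right (auxF_mul_one_add_sqrt hp2)]
  have huv : ⟪a • p, a⁻¹ • q⟫ = 0 := by
    rw [real_inner_smul_left, real_inner_smul_right, hpq, mul_zero, mul_zero]
  subst hz'
  refine ⟨?_, ?_⟩
  · rw [sum_norm_sq_add_mul_I, hu, hv]; ring
  · rw [sum_sq_add_mul_I, hu, hv, huv]; push_cast; ring

/-- The computations of Lemma 3.1 (including equation (5)): for `(p, q)` in the open unit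
disk cotangent bundle of `Sⁿ`, the vector `z ∈ ℂ^{n+1}` given by
`z_j = √(f(‖p‖))·p_j + i·q_j/√(f(‖p‖))` satisfies `∑ |z_j|² = 2` and
`∑ z_j² = −2√(1 − ‖p‖²)`, a negative real number. -/
theorem psiP_lift_lands_on_sphere_and_off_quadric (n : ℕ) (hn : 1 ≤ n)
    (p q : EuclideanSpace ℝ (Fin (n + 1)))
    (hq : ‖q‖ = 1) (hpq : ⟪p, q⟫ = 0) (hp : ‖p‖ < 1)
    (z : Fin (n + 1) → ℂ)
    (hz : ∀ j, z j = (Real.sqrt (auxF ‖p‖) * p j : ℝ) +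
      Complex.I * ((q j / Real.sqrt (auxF ‖p‖) : ℝ) : ℂ)) :
    (∑ j, ‖z j‖ ^ 2) = 2 ∧
    (∑ j, (z j) ^ 2) = ((-2 * Real.sqrt (1 - ‖p‖ ^ 2) : ℝ) : ℂ) :=
  psiP_lift_lands_on_sphere_and_off_quadric_general n p q hq hpq hp z hz
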